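/- arXiv:1905.03782 — 4 statements merged into one kernel-verified Lean document; each statement's English description precedes it below -/
import Mathlib

section
/- Let μ be a non-zero discrete complex measure on 𝕋 with at most S atoms and let N > S. Then |μ̂(0)|² < Σ_{k=0}^{N-1} |μ̂(k)|², i.e., the concentration ratio C_N(μ) = |μ̂(0)| / (Σ_{k=0}^{N-1} |μ̂(k)|²)^{1/2} is strictly less than 1. -/
/-- For a non-zero discrete complex measure with at most `S` atoms and
`N > S`, one has `|μ̂(0)|² < ∑_{k=0}^{N-1} |μ̂(k)|²`, i.e. `C_N(μ) < 1`. -/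
theorem concentration_lt_one
    (S N : ℕ) (hS : 0 < S) (hSN : S < N)
    (x : Fin S → ℂ) (hx : x ≠ 0)
    (ω : Fin S → ℝ) (hω : ∀ j, ω j ∈ Set.Ico (0 : ℝ) 1)
    (hinj : Function.Injective ω)
    (μhat : ℕ → ℂ)
    (hμhat : ∀ k : ℕ, μhat k =
      ∑ j, x j * Complex.exp (-(2 * Real.pi * Complex.I) * k * (ω j))) :
    ‖μhat 0‖ ^ 2 < ∑ k ∈ Finset.range N, ‖μhat k‖ ^ 2 := by
  set z : Fin S → ℂ := fun j => Complex.exp (-(2 * Real.pi * Complex.I) * (ω j)) with hzdef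
  have hzk : ∀ (k : ℕ) (j : Fin S),
      Complex.exp (-(2 * Real.pi * Complex.I) * k * (ω j)) = z j ^ k := by
    intro k j
    rw [hzdef]
    rw [← Complex.exp_nat_mul]
    ring_nf
  have hzne : ∀ j, z j ≠ 0 := fun j => Complex.exp_ne_zero _
  have hzinj : Function.Injective z := by
    intro a b hab
    apply hinj
    rw [hzdef] at hab
    simp only [Complex.exp_eq_exp_iff_exists_int] at hab
    obtain ⟨n, hn⟩ := hab
    have h2 : (2 * (Real.pi : ℂ) * Complex.I) ≠ 0 := by
      simp [Real.pi_ne_zero, Complex.I_ne_zero]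
    have key : (ω b : ℂ) - ω a = n := by
      have h' : (2 * (Real.pi : ℂ) * Complex.I) * ((ω b : ℂ) - ω a)
          = (2 * (Real.pi : ℂ) * Complex.I) * n := by
        linear_combination hn
      exact mul_left_cancel₀ h2 h'
    have hre : ω b - ω a = (n : ℝ) := by
      have := congrArg Complex.re key
      simpa using this
    have ha := hω a; have hb := hω b
    simp only [Set.mem_Ico] at ha hb
    have habs : |(n : ℝ)| < 1 := by
      rw [← hre, abs_lt]; constructor <;> linarith
    have hn0 : n = 0 := by
      have h1 : |n| < 1 := by exact_mod_cast habs
      rw [abs_lt] at h1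
      omega
    rw [hn0] at hre
    simp at hre
    linarith [hre]
  -- there is some k in [1, S] with μhat k ≠ 0
  have hex : ∃ k ∈ Finset.Icc 1 S, μhat k ≠ 0 := by
    by_contra hcon
    push_neg at hcon
    set y : Fin S → ℂ := fun j => x j * z j with hydef
    have hy : (Matrix.vandermonde z).transpose.mulVec y = 0 := by
      funext m
      have hmem : (m : ℕ) + 1 ∈ Finset.Icc 1 S :=
        Finset.mem_Icc.mpr ⟨Nat.succ_le_succ (Nat.zero_le _), Nat.succ_le_of_lt m.isLt⟩
      have h0 : μhat ((m : ℕ) + 1) = 0 := hcon _ hmem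
      rw [hμhat] at h0
      simp only [Matrix.mulVec, Matrix.transpose_apply, Matrix.vandermonde,
        dotProduct, Matrix.of_apply, hydef]
      rw [show (0 : Fin S → ℂ) m = 0 from rfl]
      rw [← h0]
      apply Finset.sum_congr rfl
      intro j _
      rw [hzk]
      ring
    have hdet : (Matrix.vandermonde z).transpose.det ≠ 0 := by
      rw [Matrix.det_transpose, Matrix.det_vandermonde]
      apply Finset.prod_ne_zero_iff.mpr
      intro i _
      apply Finset.prod_ne_zero_iff.mpr
      intro j hj
      rw [Finset.mem_Ioi] at hj
      exact sub_ne_zero.mpr fun h => absurd (hzinj h) (ne_of_gt hj)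
    have hy0 : y = 0 := Matrix.eq_zero_of_mulVec_eq_zero hdet hy
    apply hx
    funext j
    have hyj : y j = 0 := by rw [hy0]; rfl
    rw [hydef] at hyj
    simp only at hyj
    rcases mul_eq_zero.mp hyj with h | h
    · exact h
    · exact absurd h (hzne j)
  obtain ⟨k0, hk0mem, hk0⟩ := hex
  rw [Finset.mem_Icc] at hk0mem
  have hk0N : k0 < N := lt_of_le_of_lt hk0mem.2 hSN
  have hne : (0 : ℕ) ≠ k0 := by omega
  calc ‖μhat 0‖ ^ 2 < ‖μhat 0‖ ^ 2 + ‖μhat k0‖ ^ 2 := by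
        have : 0 < ‖μhat k0‖ ^ 2 := pow_pos (norm_pos_iff.mpr hk0) 2
        linarith
    _ = ∑ k ∈ ({0, k0} : Finset ℕ), ‖μhat k‖ ^ 2 := by
        rw [Finset.sum_pair hne]
    _ ≤ ∑ k ∈ Finset.range N, ‖μhat k‖ ^ 2 := by
        apply Finset.sum_le_sum_of_subset_of_nonneg
        · intro k hk
          simp only [Finset.mem_insert, Finset.mem_singleton] at hk
          rcases hk with h | h <;> simp only [h, Finset.mem_range] <;> omega
        · intro k _ _
          positivity
end

section
/- (Uncertainty principle for non-harmonic Fourier series) Let S > 1 and let μ = Σ_{j=1}^S x_j δ_{ω_j} be a non-zero discrete complex measure on 𝕋 with at most S atoms. Then |μ̂(0)|² ≤ (1 - 4^{-S}) Σ_{k=0}^{S} |μ̂(k)|². -/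
/-!
Put `z_j = exp(-2πiω_j)`, so that `μ̂(k) = ∑ x_j z_j ^ k`. The coefficients `c_k` of
`P = ∏ (X - z_j)` annihilate `(μ̂(0), …, μ̂(S))`, satisfy `|c_0| = ∏ |z_j| = 1`, and, the Mahler
measure of `P` being `1`, Mignotte's bound gives `∑ |c_k|² ≤ ∑ C(S,k)² = C(2S,S) ≤ 4^S`.
A vector orthogonal to `c̄` pairs with `e_0` as the projection of `e_0` onto `c̄ᗮ` does, whose
squared norm is `1 - |c_0|² / ∑ |c_k|²`; Cauchy–Schwarz finishes.
-/

open Polynomial Finset Complex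

section Duality

variable {𝕜 E : Type*} [RCLike 𝕜] [NormedAddCommGroup E] [InnerProductSpace 𝕜 E]

theorem norm_inner_sq_le_of_inner_eq_zero (e : E) {c v : E} (hcv : inner 𝕜 c v = 0) :
    ‖inner 𝕜 e v‖ ^ 2 ≤ (‖e‖ ^ 2 - ‖inner 𝕜 c e‖ ^ 2 / ‖c‖ ^ 2) * ‖v‖ ^ 2 := by
  set K := 𝕜 ∙ c
  have hv : v ∈ Kᗮ := Submodule.mem_orthogonal_singleton_iff_inner_right.mpr hcv
  have h_inner : inner 𝕜 e v = inner 𝕜 (Kᗮ.starProjection e) v := by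
    rw [Submodule.inner_starProjection_left_eq_right, Submodule.starProjection_eq_self_iff.mpr hv]
  have h_norm : ‖Kᗮ.starProjection e‖ ^ 2 = ‖e‖ ^ 2 - ‖inner 𝕜 c e‖ ^ 2 / ‖c‖ ^ 2 := by
    rw [Submodule.norm_sq_eq_add_norm_sq_starProjection e K, Submodule.starProjection_singleton,
      norm_smul, norm_div, RCLike.norm_ofReal, abs_of_nonneg (by positivity)]
    rcases eq_or_ne c 0 with rfl | hc
    · simp
    · field_simp
      ring
  calc ‖inner 𝕜 e v‖ ^ 2 ≤ (‖Kᗮ.starProjection e‖ * ‖v‖) ^ 2 := by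
        rw [h_inner]
        gcongr
        exact norm_inner_le_norm _ _
    _ = _ := by rw [mul_pow, h_norm]

variable {ι : Type*} [DecidableEq ι] {s : Finset ι} {c v : ι → 𝕜} {i : ι}

theorem norm_sq_le_of_sum_mul_eq_zero (h : ∑ j ∈ s, c j * v j = 0) (hi : i ∈ s) :
    ‖v i‖ ^ 2 ≤ (1 - ‖c i‖ ^ 2 / ∑ j ∈ s, ‖c j‖ ^ 2) * ∑ j ∈ s, ‖v j‖ ^ 2 := by
  let c' : EuclideanSpace 𝕜 s := WithLp.toLp 2 fun j => star (c j)
  let v' : EuclideanSpace 𝕜 s := WithLp.toLp 2 fun j => v j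
  have hcv : inner 𝕜 c' v' = 0 := by
    simpa [c', v', PiLp.inner_apply, mul_comm] using (sum_attach s fun j => c j * v j).trans h
  have key := norm_inner_sq_le_of_inner_eq_zero (EuclideanSpace.single ⟨i, hi⟩ (1 : 𝕜)) hcv
  simpa [c', v', EuclideanSpace.norm_sq_eq, PiLp.inner_apply, sum_attach s (fun j => ‖c j‖ ^ 2),
    sum_attach s (fun j => ‖v j‖ ^ 2)] using key

theorem norm_sq_le_one_sub_inv_mul_of_sum_mul_eq_zero (h : ∑ j ∈ s, c j * v j = 0) (hi : i ∈ s)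
    (hci : ‖c i‖ = 1) {B : ℝ} (hB : ∑ j ∈ s, ‖c j‖ ^ 2 ≤ B) :
    ‖v i‖ ^ 2 ≤ (1 - B⁻¹) * ∑ j ∈ s, ‖v j‖ ^ 2 := by
  have hc_pos : 0 < ∑ j ∈ s, ‖c j‖ ^ 2 :=
    (by simp [hci] : (0 : ℝ) < ‖c i‖ ^ 2).trans_le
      (single_le_sum (f := fun j => ‖c j‖ ^ 2) (fun _ _ => by positivity) hi)
  calc ‖v i‖ ^ 2 ≤ (1 - ‖c i‖ ^ 2 / ∑ j ∈ s, ‖c j‖ ^ 2) * ∑ j ∈ s, ‖v j‖ ^ 2 :=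
        norm_sq_le_of_sum_mul_eq_zero h hi
    _ ≤ (1 - B⁻¹) * ∑ j ∈ s, ‖v j‖ ^ 2 := by
        rw [hci, one_pow, one_div]
        gcongr

end Duality

namespace Polynomial

theorem sum_coeff_mul_sum_mul_pow_eq_zero {R ι : Type*} [CommSemiring R] (p : R[X]) {n : ℕ}
    (hn : p.natDegree < n) (s : Finset ι) (x z : ι → R) (hz : ∀ j ∈ s, p.IsRoot (z j)) :
    ∑ k ∈ range n, p.coeff k * ∑ j ∈ s, x j * z j ^ k = 0 :=
  calc ∑ k ∈ range n, p.coeff k * ∑ j ∈ s, x j * z j ^ k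
      = ∑ j ∈ s, x j * p.eval (z j) := by
        simp only [eval_eq_sum_range' hn, mul_sum]
        rw [sum_comm]
        exact sum_congr rfl fun j _ => sum_congr rfl fun k _ => by ring
    _ = 0 := sum_eq_zero fun j hj => by rw [(hz j hj).eq_zero, mul_zero]

theorem norm_coeff_zero_prod_X_sub_C {ι : Type*} (s : Finset ι) (z : ι → ℂ) :
    ‖(∏ j ∈ s, (X - C (z j))).coeff 0‖ = ∏ j ∈ s, ‖z j‖ := by
  simp [coeff_zero_eq_eval_zero, eval_prod]

theorem mahlerMeasure_prod_X_sub_C {ι : Type*} (s : Finset ι) (z : ι → ℂ) :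
    (∏ j ∈ s, (X - C (z j))).mahlerMeasure = ∏ j ∈ s, max 1 ‖z j‖ := by
  rw [prod_eq_multiset_prod, prod_mahlerMeasure_eq_mahlerMeasure_prod, Multiset.map_map,
    prod_eq_multiset_prod]
  simp

theorem sum_norm_coeff_sq_le_centralBinom_mul_mahlerMeasure_sq (p : ℂ[X]) :
    ∑ k ∈ range (p.natDegree + 1), ‖p.coeff k‖ ^ 2 ≤
      p.natDegree.centralBinom * p.mahlerMeasure ^ 2 :=
  calc ∑ k ∈ range (p.natDegree + 1), ‖p.coeff k‖ ^ 2
      ≤ ∑ k ∈ range (p.natDegree + 1), ((p.natDegree.choose k : ℝ) * p.mahlerMeasure) ^ 2 :=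
        sum_le_sum fun k _ => by gcongr; exact p.norm_coeff_le_choose_mul_mahlerMeasure k
    _ = p.natDegree.centralBinom * p.mahlerMeasure ^ 2 := by
        simp_rw [mul_pow, ← sum_mul]
        congr 1
        exact_mod_cast (Nat.sum_range_choose_sq _).trans (Nat.centralBinom_eq_two_mul_choose _).symm

theorem sum_norm_coeff_sq_prod_X_sub_C_le_four_pow {ι : Type*} (s : Finset ι) {z : ι → ℂ}
    (hz : ∀ j ∈ s, ‖z j‖ ≤ 1) :
    ∑ k ∈ range (#s + 1), ‖(∏ j ∈ s, (X - C (z j))).coeff k‖ ^ 2 ≤ 4 ^ #s :=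
  calc _ ≤ ((#s).centralBinom : ℝ) * (∏ j ∈ s, (X - C (z j))).mahlerMeasure ^ 2 :=
        natDegree_finsetProd_X_sub_C_eq_card s z ▸
          sum_norm_coeff_sq_le_centralBinom_mul_mahlerMeasure_sq _
    _ ≤ 4 ^ #s := by
        rw [mahlerMeasure_prod_X_sub_C, prod_congr rfl fun j hj => max_eq_left (hz j hj),
          prod_const_one, one_pow, mul_one]
        exact_mod_cast Nat.centralBinom_le_four_pow _

end Polynomial

theorem uncertainty_principle_complex_general
    (S : ℕ)
    (x : Fin S → ℂ)
    (ω : Fin S → ℝ)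
    (μhat : ℕ → ℂ)
    (hμhat : ∀ k : ℕ, μhat k =
      ∑ j, x j * Complex.exp (-(2 * Real.pi * Complex.I) * k * (ω j))) :
    ‖μhat 0‖ ^ 2 ≤ (1 - ((4 : ℝ) ^ S)⁻¹) * ∑ k ∈ Finset.range (S + 1), ‖μhat k‖ ^ 2 := by
  set z : Fin S → ℂ := fun j => exp (-(2 * Real.pi * I) * ω j)
  have hz : ∀ j, ‖z j‖ = 1 := fun j => by simp [z, norm_exp]
  have hμz : ∀ k : ℕ, μhat k = ∑ j, x j * z j ^ k := fun k => by
    refine (hμhat k).trans (sum_congr rfl fun j _ => ?_)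
    rw [← exp_nat_mul]
    ring_nf
  set P : ℂ[X] := ∏ j, (X - C (z j))
  refine norm_sq_le_one_sub_inv_mul_of_sum_mul_eq_zero (c := P.coeff) ?_
    (mem_range.2 S.succ_pos) (by simp [P, norm_coeff_zero_prod_X_sub_C, hz]) ?_
  · simp_rw [hμz]
    refine P.sum_coeff_mul_sum_mul_pow_eq_zero (by simp [P]) _ _ _ fun j _ => ?_
    rw [IsRoot, eval_prod]
    exact prod_eq_zero (mem_univ j) (by simp)
  · simpa using sum_norm_coeff_sq_prod_X_sub_C_le_four_pow univ fun j _ => (hz j).le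

/-- Uncertainty principle for non-harmonic Fourier series:
for `S > 1` and a non-zero discrete complex measure with at most `S` atoms,
`|μ̂(0)|² ≤ (1 - 4^{-S}) ∑_{k=0}^{S} |μ̂(k)|²`. -/
theorem uncertainty_principle_complex
    (S : ℕ) (hS : 1 < S)
    (x : Fin S → ℂ) (hx : x ≠ 0)
    (ω : Fin S → ℝ) (hω : ∀ j, ω j ∈ Set.Ico (0 : ℝ) 1)
    (hinj : Function.Injective ω)
    (μhat : ℕ → ℂ)
    (hμhat : ∀ k : ℕ, μhat k =
      ∑ j, x j * Complex.exp (-(2 * Real.pi * Complex.I) * k * (ω j))) :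
    ‖μhat 0‖ ^ 2 ≤ (1 - ((4 : ℝ) ^ S)⁻¹) * ∑ k ∈ Finset.range (S + 1), ‖μhat k‖ ^ 2 :=
  uncertainty_principle_complex_general S x ω μhat hμhat
end

section
/- Let S > 1, L ≥ S, and let Ω = {ω_1,...,ω_S} ⊂ 𝕋 be distinct. Let Φ_L(Ω) ∈ ℂ^{(L+1)×S} be the Vandermonde matrix with entries e^{-2πikω_j} for k = 0,...,L, let U ∈ ℂ^{(L+1)×S} have orthonormal columns spanning the column space of Φ_L, and let U₀ and U₁ be the submatrices of U obtained by deleting the last (resp. first) row. Then min(σ_S(U₀)², σ_S(U₁)²) ≥ 1 - S/σ_S(Φ_L)², where σ_S denotes the S-th (smallest) singular value. -/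
/-!
Write `e_k` for the `k`-th standard basis vector. Deleting row `k` of the isometry `U` lowers
`‖U v‖² = ‖v‖²` by `|(U v)_k|² = |⟪Uᴴ e_k, v⟫|² ≤ ‖Uᴴ e_k‖²`, so the smallest singular value of
the remaining rows satisfies `σ² ≥ 1 - ‖Uᴴ e_k‖²`. As `U Uᴴ e_k = Φ c` lies in the column space
of `Φ`, `‖Uᴴ e_k‖² = ⟪e_k, Φ c⟫ = ⟪Φᴴ e_k, c⟫ ≤ ‖Φᴴ e_k‖ ‖c‖`, while
`σ_min(Φ) ‖c‖ ≤ ‖Φ c‖ = ‖Uᴴ e_k‖`; hence `‖Uᴴ e_k‖ ≤ ‖Φᴴ e_k‖ / σ_min(Φ)`, and `‖Φᴴ e_k‖² = S`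
because the entries of `Φ` are unimodular. Finally `σ_min(Φ) > 0` since the first `S` rows of
`Φ` form an invertible Vandermonde matrix in the distinct nodes `e^{-2πiω_j}`.
-/

open scoped Matrix

/-- The smallest singular value of a complex matrix, defined as the infimum of
`‖A v‖₂` over unit vectors `v` (Euclidean norms). -/
noncomputable def sigmaMin {m n : ℕ} (A : Matrix (Fin m) (Fin n) ℂ) : ℝ :=
  sInf {r : ℝ | ∃ v : Fin n → ℂ, (∑ j, ‖v j‖ ^ 2) = 1 ∧
    r = Real.sqrt (∑ i, ‖A.mulVec v i‖ ^ 2)}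

open Matrix
open scoped InnerProductSpace

section SingularValues

variable {m n p : ℕ}

lemma sigmaMin_eq_sInf_image_sphere (A : Matrix (Fin m) (Fin n) ℂ) :
    sigmaMin A = sInf ((‖A.toEuclideanLin ·‖) '' Metric.sphere 0 1) := by
  have hnorm {k : ℕ} (v : Fin k → ℂ) : ‖WithLp.toLp 2 v‖ = √(∑ j, ‖v j‖ ^ 2) :=
    EuclideanSpace.norm_eq _
  unfold sigmaMin
  congr 1
  ext r
  constructor
  · rintro ⟨v, hv, rfl⟩
    exact ⟨WithLp.toLp 2 v, by simp [hnorm, hv], hnorm (A *ᵥ v)⟩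
  · rintro ⟨v, hv, rfl⟩
    refine ⟨v.ofLp, ?_, hnorm (A *ᵥ v.ofLp)⟩
    rw [mem_sphere_zero_iff_norm, EuclideanSpace.norm_eq, Real.sqrt_eq_one] at hv
    exact hv

lemma sigmaMin_nonneg (A : Matrix (Fin m) (Fin n) ℂ) : 0 ≤ sigmaMin A := by
  rw [sigmaMin_eq_sInf_image_sphere]
  exact Real.sInf_nonneg (by rintro _ ⟨v, -, rfl⟩; positivity)

lemma sigmaMin_le (A : Matrix (Fin m) (Fin n) ℂ) {v : EuclideanSpace ℂ (Fin n)} (hv : ‖v‖ = 1) :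
    sigmaMin A ≤ ‖A.toEuclideanLin v‖ := by
  rw [sigmaMin_eq_sInf_image_sphere]
  exact csInf_le ⟨0, by rintro _ ⟨w, -, rfl⟩; positivity⟩
    (Set.mem_image_of_mem _ (mem_sphere_zero_iff_norm.mpr hv))

lemma sigmaMin_mul_norm_le (A : Matrix (Fin m) (Fin n) ℂ) (v : EuclideanSpace ℂ (Fin n)) :
    sigmaMin A * ‖v‖ ≤ ‖A.toEuclideanLin v‖ := by
  rcases eq_or_ne v 0 with rfl | hv
  · simp
  have hv' : 0 < ‖v‖ := norm_pos_iff.mpr hv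
  have h := sigmaMin_le A (v := ((‖v‖⁻¹ : ℝ) : ℂ) • v) (by simp [norm_smul, hv'.ne'])
  rw [map_smul, norm_smul] at h
  simp only [Complex.norm_real, norm_inv, norm_norm] at h
  rwa [← le_div_iff₀ hv', div_eq_inv_mul]

lemma le_sigmaMin [NeZero n] {A : Matrix (Fin m) (Fin n) ℂ} {r : ℝ}
    (h : ∀ v : EuclideanSpace ℂ (Fin n), ‖v‖ = 1 → r ≤ ‖A.toEuclideanLin v‖) :
    r ≤ sigmaMin A := by
  rw [sigmaMin_eq_sInf_image_sphere]
  refine le_csInf ((NormedSpace.sphere_nonempty.mpr zero_le_one).image _) ?_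
  rintro _ ⟨v, hv, rfl⟩
  exact h v (mem_sphere_zero_iff_norm.mp hv)

lemma le_sq_sigmaMin [NeZero n] {A : Matrix (Fin m) (Fin n) ℂ} {r : ℝ}
    (h : ∀ v : EuclideanSpace ℂ (Fin n), ‖v‖ = 1 → r ≤ ‖A.toEuclideanLin v‖ ^ 2) :
    r ≤ sigmaMin A ^ 2 := by
  rcases le_or_gt r 0 with hr | hr
  · exact hr.trans (sq_nonneg _)
  have : √r ≤ sigmaMin A :=
    le_sigmaMin fun v hv => Real.sqrt_le_iff.mpr ⟨norm_nonneg _, h v hv⟩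
  simpa [Real.sq_sqrt hr.le] using pow_le_pow_left₀ (Real.sqrt_nonneg r) this 2

lemma sigmaMin_pos [NeZero n] {A : Matrix (Fin m) (Fin n) ℂ}
    (hA : Function.Injective A.mulVec) : 0 < sigmaMin A := by
  have hinj : Function.Injective A.toEuclideanLin := fun v w h =>
    WithLp.ofLp_injective 2 (hA (congrArg WithLp.ofLp h))
  obtain ⟨K, hK, hanti⟩ := (LinearMap.injective_iff_antilipschitz _).mp hinj
  refine (inv_pos.mpr (NNReal.coe_pos.mpr hK)).trans_le (le_sigmaMin fun v hv => ?_)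
  have hv_le := hanti.le_mul_dist v 0
  simp only [dist_zero_right, map_zero, hv] at hv_le
  rwa [inv_le_iff_one_le_mul₀' (NNReal.coe_pos.mpr hK)]

lemma norm_toEuclideanLin_of_conjTranspose_mul_self {U : Matrix (Fin m) (Fin n) ℂ}
    (hU : Uᴴ * U = 1) (v : EuclideanSpace ℂ (Fin n)) : ‖U.toEuclideanLin v‖ = ‖v‖ := by
  have hUU : (Uᴴ).toEuclideanLin (U.toEuclideanLin v) = v := by
    simp [toLpLin_apply, mulVec_mulVec, hU]
  have hinner : ⟪U.toEuclideanLin v, U.toEuclideanLin v⟫_ℂ = ⟪v, v⟫_ℂ := by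
    rw [← LinearMap.adjoint_inner_left, ← toEuclideanLin_conjTranspose_eq_adjoint, hUU]
  have hsq := congrArg RCLike.re hinner
  rw [inner_self_eq_norm_sq, inner_self_eq_norm_sq] at hsq
  exact (pow_left_inj₀ (norm_nonneg _) (norm_nonneg _) two_ne_zero).mp hsq

lemma toEuclideanLin_apply_eq_inner (A : Matrix (Fin m) (Fin n) ℂ)
    (v : EuclideanSpace ℂ (Fin n)) (k : Fin m) :
    A.toEuclideanLin v k = ⟪(Aᴴ).toEuclideanLin (EuclideanSpace.single k 1), v⟫_ℂ := by
  rw [toEuclideanLin_conjTranspose_eq_adjoint, LinearMap.adjoint_inner_left,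
    EuclideanSpace.inner_single_left, map_one, one_mul]

lemma norm_sq_conjTranspose_toEuclideanLin_single (A : Matrix (Fin m) (Fin n) ℂ) (k : Fin m) :
    ‖(Aᴴ).toEuclideanLin (EuclideanSpace.single k 1)‖ ^ 2 = ∑ j, ‖A k j‖ ^ 2 := by
  simp [EuclideanSpace.norm_sq_eq, toLpLin_apply]

lemma sigmaMin_mul_norm_conjTranspose_le {U : Matrix (Fin m) (Fin n) ℂ}
    {Φ : Matrix (Fin m) (Fin p) ℂ} (hU : Uᴴ * U = 1)
    (hrange : LinearMap.range U.mulVecLin ≤ LinearMap.range Φ.mulVecLin)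
    (y : EuclideanSpace ℂ (Fin m)) :
    sigmaMin Φ * ‖(Uᴴ).toEuclideanLin y‖ ≤ ‖(Φᴴ).toEuclideanLin y‖ := by
  set w := (Uᴴ).toEuclideanLin y
  obtain ⟨c, hc⟩ := hrange ⟨w.ofLp, rfl⟩
  have hΦc : Φ.toEuclideanLin (WithLp.toLp 2 c) = U.toEuclideanLin w :=
    congrArg (WithLp.toLp 2) hc
  have hw : ‖w‖ ^ 2 ≤ ‖(Φᴴ).toEuclideanLin y‖ * ‖WithLp.toLp 2 c‖ :=
    calc ‖w‖ ^ 2 = RCLike.re ⟪w, w⟫_ℂ := (inner_self_eq_norm_sq w).symm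
      _ = RCLike.re ⟪y, U.toEuclideanLin w⟫_ℂ := by
        rw [← LinearMap.adjoint_inner_left U.toEuclideanLin w y,
          ← toEuclideanLin_conjTranspose_eq_adjoint]
      _ = RCLike.re ⟪(Φᴴ).toEuclideanLin y, WithLp.toLp 2 c⟫_ℂ := by
        rw [← hΦc, ← LinearMap.adjoint_inner_left, ← toEuclideanLin_conjTranspose_eq_adjoint]
      _ ≤ _ := (RCLike.re_le_norm _).trans (norm_inner_le_norm _ _)
  have hc : sigmaMin Φ * ‖WithLp.toLp 2 c‖ ≤ ‖w‖ := by
    simpa [hΦc, norm_toEuclideanLin_of_conjTranspose_mul_self hU] using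
      sigmaMin_mul_norm_le Φ (WithLp.toLp 2 c)
  rcases (norm_nonneg w).eq_or_lt with h0 | hpos
  · rw [← h0, mul_zero]
    exact norm_nonneg _
  refine le_of_mul_le_mul_right ?_ hpos
  calc sigmaMin Φ * ‖w‖ * ‖w‖ = sigmaMin Φ * ‖w‖ ^ 2 := by ring
    _ ≤ sigmaMin Φ * (‖(Φᴴ).toEuclideanLin y‖ * ‖WithLp.toLp 2 c‖) :=
      mul_le_mul_of_nonneg_left hw (sigmaMin_nonneg Φ)
    _ = ‖(Φᴴ).toEuclideanLin y‖ * (sigmaMin Φ * ‖WithLp.toLp 2 c‖) := by ring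
    _ ≤ ‖(Φᴴ).toEuclideanLin y‖ * ‖w‖ := mul_le_mul_of_nonneg_left hc (norm_nonneg _)

lemma one_sub_sq_norm_conjTranspose_single_le_sq_sigmaMin_submatrix [NeZero n]
    {U : Matrix (Fin (m + 1)) (Fin n) ℂ} (hU : Uᴴ * U = 1) (k : Fin (m + 1)) :
    1 - ‖(Uᴴ).toEuclideanLin (EuclideanSpace.single k 1)‖ ^ 2 ≤
      sigmaMin (U.submatrix k.succAbove id) ^ 2 := by
  refine le_sq_sigmaMin fun v hv => ?_
  have hsplit : ‖U.toEuclideanLin v‖ ^ 2 =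
      ‖U.toEuclideanLin v k‖ ^ 2 + ‖(U.submatrix k.succAbove id).toEuclideanLin v‖ ^ 2 := by
    simp only [EuclideanSpace.norm_sq_eq]
    exact Fin.sum_univ_succAbove _ k
  have hk : ‖U.toEuclideanLin v k‖ ≤ ‖(Uᴴ).toEuclideanLin (EuclideanSpace.single k 1)‖ := by
    simpa [toEuclideanLin_apply_eq_inner, hv] using norm_inner_le_norm (𝕜 := ℂ)
      ((Uᴴ).toEuclideanLin (EuclideanSpace.single k 1)) v
  rw [norm_toEuclideanLin_of_conjTranspose_mul_self hU, hv] at hsplit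
  nlinarith [pow_le_pow_left₀ (norm_nonneg _) hk 2]

lemma one_sub_div_sq_sigmaMin_le_sq_sigmaMin_submatrix [NeZero n]
    {U : Matrix (Fin (m + 1)) (Fin n) ℂ} {Φ : Matrix (Fin (m + 1)) (Fin p) ℂ}
    (hU : Uᴴ * U = 1) (hrange : LinearMap.range U.mulVecLin ≤ LinearMap.range Φ.mulVecLin)
    (hΦ : 0 < sigmaMin Φ) (k : Fin (m + 1)) :
    1 - ‖(Φᴴ).toEuclideanLin (EuclideanSpace.single k 1)‖ ^ 2 / sigmaMin Φ ^ 2 ≤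
      sigmaMin (U.submatrix k.succAbove id) ^ 2 := by
  refine le_trans ?_ (one_sub_sq_norm_conjTranspose_single_le_sq_sigmaMin_submatrix hU k)
  rw [sub_le_sub_iff_left, le_div_iff₀ (by positivity), ← mul_pow, mul_comm]
  exact pow_le_pow_left₀ (by positivity)
    (sigmaMin_mul_norm_conjTranspose_le hU hrange (EuclideanSpace.single k 1)) 2

end SingularValues

lemma mulVec_injective_of_apply_eq_pow {R : Type*} [CommRing R] [IsDomain R] {m n : ℕ}
    (hnm : n ≤ m) {x : Fin n → R} (hx : Function.Injective x) {A : Matrix (Fin m) (Fin n) R}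
    (hA : ∀ k j, A k j = x j ^ (k : ℕ)) : Function.Injective A.mulVec := by
  refine (injective_iff_map_eq_zero A.mulVecLin).mpr fun c hc =>
    eq_zero_of_forall_pow_sum_mul_pow_eq_zero hx fun i => ?_
  simpa [mulVec, dotProduct, hA, mul_comm] using congrFun hc (Fin.castLE hnm i)

open Real Complex in
lemma exp_neg_two_pi_I_mul_injOn :
    Set.InjOn (fun t : ℝ => exp (-(2 * π * I) * t)) (Set.Ico 0 1) := by
  rintro a ⟨ha0, ha1⟩ b ⟨hb0, hb1⟩ hab
  obtain ⟨n, hn⟩ := exp_eq_exp_iff_exists_int.mp hab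
  have hba : (b - a : ℂ) = n := by
    have h2πI : 2 * (π : ℂ) * I ≠ 0 := by simp [pi_ne_zero]
    apply mul_left_cancel₀ h2πI
    linear_combination hn
  have hba' : b - a = n := by exact_mod_cast hba
  have h1 : (-1 : ℤ) < n := by exact_mod_cast (show (-1 : ℝ) < n by linarith)
  have h2 : n < 1 := by exact_mod_cast (show (n : ℝ) < 1 by linarith)
  have hn0 : n = 0 := by omega
  simp only [hn0, Int.cast_zero] at hba'
  linarith

/-- with `Φ_L` the `(L+1)×S` Vandermonde matrix with nodes `e^{-2πiω_j}`,
`U` an orthonormal basis matrix for its column space and `U₀`, `U₁` the submatrices of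
the first resp. last `L` rows of `U`, one has
`min(σ_S(U₀)², σ_S(U₁)²) ≥ 1 - S/σ_S(Φ_L)²`. -/
theorem sigmaMin_U0_U1_vandermonde_bound
    (L S : ℕ) (hS : 1 < S) (hLS : S ≤ L)
    (ω : Fin S → ℝ) (hω : ∀ j, ω j ∈ Set.Ico (0 : ℝ) 1)
    (hinj : Function.Injective ω)
    (Φ : Matrix (Fin (L + 1)) (Fin S) ℂ)
    (hΦ : ∀ (k : Fin (L + 1)) (j : Fin S),
      Φ k j = Complex.exp (-(2 * Real.pi * Complex.I) * (k : ℕ) * (ω j)))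
    (U : Matrix (Fin (L + 1)) (Fin S) ℂ)
    (hUorth : Uᴴ * U = 1)
    (hrange : LinearMap.range U.mulVecLin = LinearMap.range Φ.mulVecLin)
    (U₀ U₁ : Matrix (Fin L) (Fin S) ℂ)
    (hU₀ : U₀ = U.submatrix Fin.castSucc id)
    (hU₁ : U₁ = U.submatrix Fin.succ id) :
    1 - (S : ℝ) / (sigmaMin Φ) ^ 2 ≤ min ((sigmaMin U₀) ^ 2) ((sigmaMin U₁) ^ 2) := by
  have : NeZero S := ⟨by omega⟩
  set x : Fin S → ℂ := fun j => Complex.exp (-(2 * Real.pi * Complex.I) * ω j)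
  have hΦx : ∀ k j, Φ k j = x j ^ (k : ℕ) := fun k j => by
    rw [hΦ, ← Complex.exp_nat_mul]
    ring_nf
  have hx_norm : ∀ j, ‖x j‖ = 1 := fun j => by
    simp [x, Complex.norm_exp]
  have hσ : 0 < sigmaMin Φ := sigmaMin_pos <| mulVec_injective_of_apply_eq_pow (by omega)
    (fun a b hab => hinj (exp_neg_two_pi_I_mul_injOn (hω a) (hω b) hab)) hΦx
  have hrow (k : Fin (L + 1)) : ‖(Φᴴ).toEuclideanLin (EuclideanSpace.single k 1)‖ ^ 2 = S := by
    simp [norm_sq_conjTranspose_toEuclideanLin_single, hΦx, hx_norm]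
  have hbound (k : Fin (L + 1)) :
      1 - (S : ℝ) / sigmaMin Φ ^ 2 ≤ sigmaMin (U.submatrix k.succAbove id) ^ 2 :=
    hrow k ▸ one_sub_div_sq_sigmaMin_le_sq_sigmaMin_submatrix hUorth hrange.le hσ k
  rw [hU₀, hU₁, ← Fin.succAbove_last, ← Fin.succAbove_zero]
  exact le_min (hbound _) (hbound _)
end

section
/- Let S > 1, L ≥ S, Ω = {ω_1,...,ω_S} ⊂ 𝕋 distinct, Φ_L(Ω) the (L+1)×S Vandermonde matrix with unit-circle nodes e^{-2πiω_j}, U an orthonormal basis matrix for its column space, and U₀, U₁ the first-L-rows and last-L-rows submatrices of U. Then min(σ_S(U₀)², σ_S(U₁)²) ≥ 4^{-S}. -/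
/-!
A vector `v` with `‖v‖ = 1` is mapped by `U` to a unit vector in the column space of `Φ`, i.e. to
the sequence `f k = ∑ⱼ cⱼ uⱼ^k` (`k ≤ L`) of Fourier coefficients of a measure with `S` atoms
`uⱼ = e^{-2πiωⱼ}` on the unit circle. The polynomial `p = ∏ⱼ (X - uⱼ)` has `|p(0)| = 1`, Mahler
measure `1`, hence `|pₖ| ≤ (S choose k)`, and annihilates `f`: `∑ₖ pₖ f(k) = ∑ⱼ cⱼ p(uⱼ) = 0`.
Cauchy–Schwarz then gives `|f 0|² ≤ (4^S - 1) ∑_{k=1}^{S} |f k|²`, so deleting the first row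
keeps at least a `4^{-S}` fraction of `‖f‖² = 1`. Deleting the last row is the same statement for
the reversed sequence, which is again of this form with nodes `uⱼ⁻¹`.
-/

open scoped Matrix

section UncertaintyPrinciple

open Polynomial Finset

variable {ι : Type*} [Fintype ι]

/-- For `u j = e^{-2πiω_j}` this is the Fourier coefficient `μ̂(k)` of `μ = ∑ⱼ c j • δ_{ω_j}`. -/
def weightedPowerSum (c u : ι → ℂ) (k : ℕ) : ℂ := ∑ j, c j * u j ^ k

lemma mahlerMeasure_prod_X_sub_C_of_norm_eq_one (u : ι → ℂ) (hu : ∀ j, ‖u j‖ = 1) :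
    (∏ j, (X - C (u j))).mahlerMeasure = 1 := by
  rw [prod_eq_multiset_prod, prod_mahlerMeasure_eq_mahlerMeasure_prod]
  simp [mahlerMeasure_X_sub_C, hu]

lemma norm_coeff_prod_X_sub_C_le_choose (u : ι → ℂ) (hu : ∀ j, ‖u j‖ = 1) (k : ℕ) :
    ‖(∏ j, (X - C (u j))).coeff k‖ ≤ (Fintype.card ι).choose k := by
  have h := norm_coeff_le_choose_mul_mahlerMeasure k (∏ j, (X - C (u j)))
  rwa [mahlerMeasure_prod_X_sub_C_of_norm_eq_one u hu, mul_one,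
    natDegree_finsetProd_X_sub_C_eq_card, card_univ] at h

lemma sum_coeff_mul_weightedPowerSum (c u : ι → ℂ) (p : ℂ[X]) :
    ∑ k ∈ range (p.natDegree + 1), p.coeff k * weightedPowerSum c u k =
      ∑ j, c j * p.eval (u j) := by
  simp only [weightedPowerSum, eval_eq_sum_range, mul_sum]
  rw [sum_comm]
  exact sum_congr rfl fun j _ => sum_congr rfl fun k _ => by ring

lemma sum_range_choose_succ_sq_le (n : ℕ) :
    ∑ k ∈ range n, (n.choose (k + 1) : ℝ) ^ 2 ≤ 4 ^ n - 1 := by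
  have hsq := sum_sq_le_sq_sum_of_nonneg (s := range (n + 1))
    (f := fun k => (n.choose k : ℝ)) fun _ _ => by positivity
  have htwo : ∑ k ∈ range (n + 1), (n.choose k : ℝ) = 2 ^ n := by
    exact_mod_cast Nat.sum_range_choose n
  rw [sum_range_succ', htwo] at hsq
  rw [show (4 : ℝ) ^ n = (2 ^ n) ^ 2 by rw [← pow_mul, mul_comm, pow_mul]; norm_num]
  simp only [Nat.choose_zero_right, Nat.cast_one, one_pow] at hsq
  linarith

theorem norm_sq_weightedPowerSum_zero_le (c u : ι → ℂ) (hu : ∀ j, ‖u j‖ = 1) :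
    ‖weightedPowerSum c u 0‖ ^ 2 ≤ (4 ^ Fintype.card ι - 1) *
      ∑ k ∈ range (Fintype.card ι), ‖weightedPowerSum c u (k + 1)‖ ^ 2 := by
  set S := Fintype.card ι
  set p : ℂ[X] := ∏ j, (X - C (u j))
  set f := weightedPowerSum c u
  have hdeg : p.natDegree = S := by simp [p, S]
  have hroots : ∀ j, p.eval (u j) = 0 := fun j => by
    simp only [p, eval_prod]
    exact prod_eq_zero (mem_univ j) (by simp)
  have hrec : p.coeff 0 * f 0 = -∑ k ∈ range S, p.coeff (k + 1) * f (k + 1) := by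
    have h := sum_coeff_mul_weightedPowerSum c u p
    rw [hdeg, sum_range_succ'] at h
    have hzero : ∑ j, c j * p.eval (u j) = 0 := by simp [hroots]
    linear_combination h + hzero
  have hc0 : ‖p.coeff 0‖ = 1 := by simp [p, coeff_zero_eq_eval_zero, eval_prod, hu]
  calc ‖f 0‖ ^ 2 = ‖∑ k ∈ range S, p.coeff (k + 1) * f (k + 1)‖ ^ 2 := by
        rw [← one_mul ‖f 0‖, ← hc0, ← norm_mul, hrec, norm_neg]
    _ ≤ (∑ k ∈ range S, ‖p.coeff (k + 1)‖ * ‖f (k + 1)‖) ^ 2 := by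
        gcongr
        exact (norm_sum_le _ _).trans_eq (by simp only [norm_mul])
    _ ≤ (∑ k ∈ range S, ‖p.coeff (k + 1)‖ ^ 2) * ∑ k ∈ range S, ‖f (k + 1)‖ ^ 2 :=
        sum_mul_sq_le_sq_mul_sq _ _ _
    _ ≤ (4 ^ S - 1) * ∑ k ∈ range S, ‖f (k + 1)‖ ^ 2 := by
        gcongr
        refine le_trans (sum_le_sum fun k _ => ?_) (sum_range_choose_succ_sq_le S)
        gcongr
        exact norm_coeff_prod_X_sub_C_le_choose u hu _

theorem inv_four_pow_mul_sum_le_sum_tail (c u : ι → ℂ) (hu : ∀ j, ‖u j‖ = 1) {L : ℕ}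
    (hL : Fintype.card ι ≤ L) :
    (4 ^ Fintype.card ι : ℝ)⁻¹ * ∑ k ∈ range (L + 1), ‖weightedPowerSum c u k‖ ^ 2 ≤
      ∑ k ∈ range L, ‖weightedPowerSum c u (k + 1)‖ ^ 2 := by
  have hfirst : ‖weightedPowerSum c u 0‖ ^ 2 ≤
      (4 ^ Fintype.card ι - 1) * ∑ k ∈ range L, ‖weightedPowerSum c u (k + 1)‖ ^ 2 := by
    refine (norm_sq_weightedPowerSum_zero_le c u hu).trans ?_
    gcongr
    exact sub_nonneg.mpr (one_le_pow₀ (by norm_num))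
  rw [sum_range_succ', inv_mul_le_iff₀ (by positivity)]
  linarith

lemma weightedPowerSum_reverse (c u : ι → ℂ) (hu : ∀ j, u j ≠ 0) {L k : ℕ} (hk : k ≤ L) :
    weightedPowerSum (fun j => c j * u j ^ L) (fun j => (u j)⁻¹) k =
      weightedPowerSum c u (L - k) := by
  refine sum_congr rfl fun j _ => ?_
  obtain ⟨m, rfl⟩ := Nat.exists_eq_add_of_le hk
  dsimp only
  rw [Nat.add_sub_cancel_left, pow_add, inv_pow]
  field_simp [hu j]

theorem inv_four_pow_mul_sum_le_sum_init (c u : ι → ℂ) (hu : ∀ j, ‖u j‖ = 1) {L : ℕ}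
    (hL : Fintype.card ι ≤ L) :
    (4 ^ Fintype.card ι : ℝ)⁻¹ * ∑ k ∈ range (L + 1), ‖weightedPowerSum c u k‖ ^ 2 ≤
      ∑ k ∈ range L, ‖weightedPowerSum c u k‖ ^ 2 := by
  have hu₀ : ∀ j, u j ≠ 0 := fun j => norm_ne_zero_iff.mp (by simp [hu j])
  set c' := fun j => c j * u j ^ L
  set u' := fun j => (u j)⁻¹
  have h := inv_four_pow_mul_sum_le_sum_tail c' u' (by simp [u', hu]) hL
  have hall : ∑ k ∈ range (L + 1), ‖weightedPowerSum c' u' k‖ ^ 2 =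
      ∑ k ∈ range (L + 1), ‖weightedPowerSum c u k‖ ^ 2 := by
    rw [← sum_range_reflect (fun k => ‖weightedPowerSum c u k‖ ^ 2) (L + 1)]
    refine sum_congr rfl fun k hk => ?_
    rw [weightedPowerSum_reverse c u hu₀ (by simp at hk; omega)]
    congr 3
  have htail : ∑ k ∈ range L, ‖weightedPowerSum c' u' (k + 1)‖ ^ 2 =
      ∑ k ∈ range L, ‖weightedPowerSum c u k‖ ^ 2 := by
    rw [← sum_range_reflect (fun k => ‖weightedPowerSum c u k‖ ^ 2) L]
    refine sum_congr rfl fun k hk => ?_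
    rw [weightedPowerSum_reverse c u hu₀ (by simp at hk; omega)]
    congr 3; omega
  rwa [hall, htail] at h

end UncertaintyPrinciple

section Matrices

variable {m : ℕ} {ι : Type*} [Fintype ι]

lemma le_sigmaMin_sq {n : ℕ} (A : Matrix (Fin m) (Fin n) ℂ) {b : ℝ} (hb : 0 ≤ b) (hn : 0 < n)
    (h : ∀ v : Fin n → ℂ, ∑ j, ‖v j‖ ^ 2 = 1 → b ≤ ∑ i, ‖(A *ᵥ v) i‖ ^ 2) :
    b ≤ sigmaMin A ^ 2 := by
  have hne : {r : ℝ | ∃ v : Fin n → ℂ, ∑ j, ‖v j‖ ^ 2 = 1 ∧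
      r = Real.sqrt (∑ i, ‖(A *ᵥ v) i‖ ^ 2)}.Nonempty :=
    ⟨_, Pi.single ⟨0, hn⟩ 1, by simp [Pi.single_apply, apply_ite, Finset.sum_ite_eq'], rfl⟩
  have hsqrt : Real.sqrt b ≤ sigmaMin A := by
    refine le_csInf hne ?_
    rintro r ⟨v, hv, rfl⟩
    exact Real.sqrt_le_sqrt (h v hv)
  calc b = Real.sqrt b ^ 2 := (Real.sq_sqrt hb).symm
    _ ≤ sigmaMin A ^ 2 := by gcongr

lemma sum_norm_sq_eq_re_star_dotProduct (w : ι → ℂ) : ∑ k, ‖w k‖ ^ 2 = (star w ⬝ᵥ w).re := by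
  rw [dotProduct, Complex.re_sum]
  refine Finset.sum_congr rfl fun k _ => ?_
  simp [← Complex.normSq_eq_norm_sq, Complex.normSq_apply]

lemma sum_norm_sq_mulVec_of_conjTranspose_mul_self [DecidableEq ι] {U : Matrix (Fin m) ι ℂ}
    (hU : Uᴴ * U = 1) (v : ι → ℂ) : ∑ k, ‖(U *ᵥ v) k‖ ^ 2 = ∑ j, ‖v j‖ ^ 2 := by
  rw [sum_norm_sq_eq_re_star_dotProduct, sum_norm_sq_eq_re_star_dotProduct, Matrix.star_mulVec,
    Matrix.dotProduct_mulVec, Matrix.vecMul_vecMul, hU, Matrix.vecMul_one]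

lemma exists_weightedPowerSum_eq_mulVec {u : ι → ℂ} {Φ U : Matrix (Fin m) ι ℂ}
    (hΦ : ∀ k j, Φ k j = u j ^ (k : ℕ))
    (hrange : LinearMap.range U.mulVecLin ≤ LinearMap.range Φ.mulVecLin) (v : ι → ℂ) :
    ∃ c, ∀ k, (U *ᵥ v) k = weightedPowerSum c u k := by
  obtain ⟨c, hc⟩ := hrange ⟨v, rfl⟩
  rw [Matrix.mulVecLin_apply, Matrix.mulVecLin_apply] at hc
  refine ⟨c, fun k => ?_⟩
  rw [← hc, Matrix.mulVec, dotProduct, weightedPowerSum]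
  exact Finset.sum_congr rfl fun j _ => by rw [hΦ, mul_comm]

end Matrices

theorem sigmaMin_U0_U1_uncertainty_bound_general
    (L S : ℕ) (hS : 1 < S) (hLS : S ≤ L)
    (ω : Fin S → ℝ)
    (Φ : Matrix (Fin (L + 1)) (Fin S) ℂ)
    (hΦ : ∀ (k : Fin (L + 1)) (j : Fin S),
      Φ k j = Complex.exp (-(2 * Real.pi * Complex.I) * (k : ℕ) * (ω j)))
    (U : Matrix (Fin (L + 1)) (Fin S) ℂ)
    (hUorth : Uᴴ * U = 1)
    (hrange : LinearMap.range U.mulVecLin = LinearMap.range Φ.mulVecLin)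
    (U₀ U₁ : Matrix (Fin L) (Fin S) ℂ)
    (hU₀ : U₀ = U.submatrix Fin.castSucc id)
    (hU₁ : U₁ = U.submatrix Fin.succ id) :
    ((4 : ℝ) ^ S)⁻¹ ≤ min ((sigmaMin U₀) ^ 2) ((sigmaMin U₁) ^ 2) := by
  set u : Fin S → ℂ := fun j => Complex.exp (-(2 * Real.pi * Complex.I) * ω j)
  have hu : ∀ j, ‖u j‖ = 1 := fun j => by simp [u, Complex.norm_exp]
  have hΦu : ∀ (k : Fin (L + 1)) j, Φ k j = u j ^ (k : ℕ) := fun k j => by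
    rw [hΦ, ← Complex.exp_nat_mul]
    ring_nf
  have hSL : Fintype.card (Fin S) ≤ L := by simpa using hLS
  have hrep : ∀ v : Fin S → ℂ, ∑ j, ‖v j‖ ^ 2 = 1 → ∃ c,
      (∀ k, (U *ᵥ v) k = weightedPowerSum c u k) ∧
        ∑ k ∈ Finset.range (L + 1), ‖weightedPowerSum c u k‖ ^ 2 = 1 := fun v hv => by
    obtain ⟨c, hc⟩ := exists_weightedPowerSum_eq_mulVec hΦu hrange.le v
    refine ⟨c, hc, ?_⟩
    rw [← Fin.sum_univ_eq_sum_range, ← hv, ← sum_norm_sq_mulVec_of_conjTranspose_mul_self hUorth v]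
    simp only [hc]
  subst hU₀ hU₁
  refine le_min (le_sigmaMin_sq _ (by positivity) (by omega) fun v hv => ?_)
    (le_sigmaMin_sq _ (by positivity) (by omega) fun v hv => ?_) <;>
    obtain ⟨c, hc, hnorm⟩ := hrep v hv
  · have hU₀v : ∀ i : Fin L, (U.submatrix Fin.castSucc id *ᵥ v) i = weightedPowerSum c u i :=
      fun i => hc i.castSucc
    simpa [hU₀v, hnorm, Fin.sum_univ_eq_sum_range (fun k => ‖weightedPowerSum c u k‖ ^ 2)] using
      inv_four_pow_mul_sum_le_sum_init c u hu hSL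
  · have hU₁v : ∀ i : Fin L, (U.submatrix Fin.succ id *ᵥ v) i = weightedPowerSum c u (i + 1) :=
      fun i => hc i.succ
    simpa [hU₁v, hnorm, Fin.sum_univ_eq_sum_range (fun k => ‖weightedPowerSum c u (k + 1)‖ ^ 2)]
      using inv_four_pow_mul_sum_le_sum_tail c u hu hSL

/-- with `Φ_L` the `(L+1)×S` Vandermonde matrix with nodes `e^{-2πiω_j}`,
`U` an orthonormal basis matrix for its column space and `U₀`, `U₁` the submatrices of
the first resp. last `L` rows of `U`, one has `min(σ_S(U₀)², σ_S(U₁)²) ≥ 4^{-S}`. -/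
theorem sigmaMin_U0_U1_uncertainty_bound
    (L S : ℕ) (hS : 1 < S) (hLS : S ≤ L)
    (ω : Fin S → ℝ) (hω : ∀ j, ω j ∈ Set.Ico (0 : ℝ) 1)
    (hinj : Function.Injective ω)
    (Φ : Matrix (Fin (L + 1)) (Fin S) ℂ)
    (hΦ : ∀ (k : Fin (L + 1)) (j : Fin S),
      Φ k j = Complex.exp (-(2 * Real.pi * Complex.I) * (k : ℕ) * (ω j)))
    (U : Matrix (Fin (L + 1)) (Fin S) ℂ)
    (hUorth : Uᴴ * U = 1)
    (hrange : LinearMap.range U.mulVecLin = LinearMap.range Φ.mulVecLin)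
    (U₀ U₁ : Matrix (Fin L) (Fin S) ℂ)
    (hU₀ : U₀ = U.submatrix Fin.castSucc id)
    (hU₁ : U₁ = U.submatrix Fin.succ id) :
    ((4 : ℝ) ^ S)⁻¹ ≤ min ((sigmaMin U₀) ^ 2) ((sigmaMin U₁) ^ 2) :=
  sigmaMin_U0_U1_uncertainty_bound_general L S hS hLS ω Φ hΦ U hUorth hrange U₀ U₁ hU₀ hU₁
end
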